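/- arXiv:2006.04247 — 4 statements merged into one kernel-verified Lean document; each statement's English description precedes it below -/
import Mathlib

section
/- Let L be a Lie algebra and z an element of L such that the adjoint action ad(z) = [z, -] vanishes on a Lie ideal J of L with the quotient L/J finite-dimensional and solvable. Then the ideal generated by z is solvable. -/
/-!
The centralizer of `J` is an ideal, so it contains `I = lieSpan {z}`, i.e. `⁅I, J⁆ = ⊥`.
If `(L ⧸ J)⁽ⁿ⁾ = 0` then `L⁽ⁿ⁾ ≤ J`, hence `I⁽ⁿ⁾ ≤ I ⊓ J` and `I⁽ⁿ⁺¹⁾ ≤ ⁅I, J⁆ = ⊥`.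
-/

section

variable {R L M : Type*} [CommRing R] [LieRing L] [LieAlgebra R L]

namespace LieSubmodule

variable [AddCommGroup M] [Module R M] [LieRingModule L M] [LieModule R L M]

theorem lieSpan_singleton_lie_eq_bot {x : L} {N : LieSubmodule R L M}
    (hx : ∀ m ∈ N, ⁅x, m⁆ = 0) : ⁅(lieSpan R L {x} : LieIdeal R L), N⁆ = ⊥ := by
  have hker : lieSpan R L {x} ≤ LieModule.ker R L N :=
    lieSpan_le.mpr <| Set.singleton_subset_iff.mpr <|
      (LieModule.mem_ker R L N x).mpr fun m ↦ Subtype.ext (hx m m.2)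
  refine _root_.eq_bot_iff.mpr <| (mono_lie_left N hker).trans_eq ?_
  rw [lie_eq_bot_iff]
  intro y hy m hm
  exact congrArg Subtype.val ((LieModule.mem_ker R L N y).mp hy ⟨m, hm⟩)

end LieSubmodule

namespace LieAlgebra

theorem derivedSeries_le_of_derivedSeries_quotient_eq_bot {J : LieIdeal R L} {n : ℕ}
    (hn : derivedSeries R (L ⧸ J) n = ⊥) : derivedSeries R L n ≤ J := by
  let π : L →ₗ⁅R⁆ L ⧸ J := { LieSubmodule.Quotient.mk' J with map_lie' := rfl }
  have hker : π.ker = J := by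
    ext x
    exact LieHom.mem_ker.trans (LieSubmodule.Quotient.mk_eq_zero (N := J))
  have hmap := LieIdeal.derivedSeries_map_eq (f := π) n (LieSubmodule.Quotient.surjective_mk' J)
  rw [hn, LieIdeal.map_eq_bot_iff, hker] at hmap
  exact hmap

theorem isSolvable_of_lie_eq_bot {I J : LieIdeal R L} (hIJ : ⁅I, J⁆ = ⊥)
    [IsSolvable (L ⧸ J)] : IsSolvable I := by
  obtain ⟨n, hn⟩ := IsSolvable.solvable (R := R) (L := L ⧸ J)
  have hJ : derivedSeriesOfIdeal R L n I ≤ J :=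
    (derivedSeriesOfIdeal_mono le_top n).trans
      (derivedSeries_le_of_derivedSeries_quotient_eq_bot hn)
  have hbot : derivedSeriesOfIdeal R L (n + 1) I = ⊥ := by
    rw [derivedSeriesOfIdeal_succ, eq_bot_iff, ← hIJ]
    exact LieSubmodule.mono_lie (derivedSeriesOfIdeal_le_self I n) hJ
  exact IsSolvable.mk ((LieIdeal.derivedSeries_eq_bot_iff I (n + 1)).mpr hbot)

end LieAlgebra

end

theorem stmt1_general {k L : Type*} [Field k] [LieRing L] [LieAlgebra k L] (z : L)
    (J : LieIdeal k L) (hzJ : ∀ x ∈ J, ⁅z, x⁆ = 0)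
    [LieAlgebra.IsSolvable (L ⧸ J)] :
    LieAlgebra.IsSolvable (LieSubmodule.lieSpan k L {z} : LieIdeal k L) :=
  LieAlgebra.isSolvable_of_lie_eq_bot (LieSubmodule.lieSpan_singleton_lie_eq_bot hzJ)

/-- If `ad(z)` vanishes on a Lie ideal `J` with `L ⧸ J` finite-dimensional and solvable,
then the Lie ideal generated by `z` is solvable. -/
theorem stmt1 {k L : Type*} [Field k] [LieRing L] [LieAlgebra k L] (z : L)
    (J : LieIdeal k L) (hzJ : ∀ x ∈ J, ⁅z, x⁆ = 0)
    [FiniteDimensional k (L ⧸ J)] [LieAlgebra.IsSolvable (L ⧸ J)] :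
    LieAlgebra.IsSolvable (LieSubmodule.lieSpan k L {z} : LieIdeal k L) :=
  stmt1_general z J hzJ
end

section
/- Let S be a commutative noetherian local ring with residue field k and M a finitely generated S-module. If there exists a surjection M → k that factors through a finitely generated free S-module, then M has a free direct summand of rank 1. -/
/-- Over a commutative noetherian local ring `S` with residue field `k`: if a finitely
generated module `M` admits a surjection onto `k` factoring through a finitely
generated free module, then `M` has a free direct summand of rank 1, i.e. there is a
split surjection `M → S`. -/
theorem stmt15 {S M F : Type*} [CommRing S] [IsNoetherianRing S] [IsLocalRing S]
    [AddCommGroup M] [Module S M] [Module.Finite S M]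
    [AddCommGroup F] [Module S F] [Module.Free S F] [Module.Finite S F]
    (φ : M →ₗ[S] IsLocalRing.ResidueField S) (hφ : Function.Surjective φ)
    (g : M →ₗ[S] F) (h : F →ₗ[S] IsLocalRing.ResidueField S) (hfac : φ = h ∘ₗ g) :
    ∃ (p : M →ₗ[S] S) (s : S →ₗ[S] M), p ∘ₗ s = LinearMap.id := by
  obtain ⟨x, hx⟩ := hφ 1
  have h1 : h (g x) = 1 := by rw [hfac] at hx; exact hx
  set b := Module.Free.chooseBasis S F with hb
  have hsum : (1 : IsLocalRing.ResidueField S) = ∑ i, b.repr (g x) i • h (b i) := by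
    rw [← h1]
    conv_lhs => rw [← b.sum_repr (g x)]
    simp only [map_sum, map_smul]
  have hne : ∃ i, b.repr (g x) i • h (b i) ≠ 0 := by
    by_contra hc
    push_neg at hc
    simp only [hc, Finset.sum_const_zero] at hsum
    exact one_ne_zero hsum
  obtain ⟨i, hi⟩ := hne
  set a := b.repr (g x) i with ha
  have hres : IsLocalRing.residue S a ≠ 0 := by
    intro h0
    apply hi
    rw [Algebra.smul_def, IsLocalRing.ResidueField.algebraMap_eq, h0, zero_mul]
  have hunit : IsUnit a := by
    rw [← IsLocalRing.notMem_maximalIdeal]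
    intro hm
    exact hres (Ideal.Quotient.eq_zero_iff_mem.mpr hm)
  obtain ⟨u, hu⟩ := hunit
  refine ⟨(b.coord i).comp g, LinearMap.toSpanSingleton S M ((↑u⁻¹ : S) • x), ?_⟩
  apply LinearMap.ext_ring
  simp only [LinearMap.comp_apply, LinearMap.toSpanSingleton_apply, one_smul,
    map_smul, LinearMap.id_apply]
  rw [Module.Basis.coord_apply, ← ha, smul_eq_mul, ← hu, Units.inv_mul]
end

section
/- Let R be a commutative noetherian local ring and x₁, …, xₙ elements of the maximal ideal. If the Koszul complex K(x₁,…,xₙ; R) has H₁ = 0, then x₁, …, xₙ is a regular sequence. -/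
/-!
Induct on `n`, splitting off the last element `a`. A Koszul relation of `(x, a)` restricts on
the first `n` coordinates to a Koszul relation of `x` minus `a • b`, and has last coordinate
`∑ bᵢ xᵢ`. Extending a relation of `x` by `0` therefore shows that the cycles `Z₁(x)` lie in
`B₁(x) + (a) Z₁(x)`, so `H₁(x) = 0` by Nakayama. If `a z = ∑ cᵢ xᵢ`, then `(c, -z)` is a
relation of `(x, a)`, and its last coordinate shows `z ∈ (x)`: `a` is regular modulo `(x)`.
-/

lemma List.ofFn_snoc {α : Type*} {n : ℕ} (x : Fin n → α) (a : α) :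
    List.ofFn (Fin.snoc x a : Fin (n + 1) → α) = List.ofFn x ++ [a] := by
  rw [List.ofFn_succ', List.concat_eq_append]
  simp only [Fin.snoc_castSucc, Fin.snoc_last]

section Koszul

variable {R : Type*} [CommRing R]

def koszulRelations {ι : Type*} [DecidableEq ι] (x : ι → R) : Submodule R (ι → R) :=
  Submodule.span R
    {v | ∃ i j, v = x i • (Pi.single j 1 : ι → R) - x j • (Pi.single i 1 : ι → R)}

section Snoc

variable {n : ℕ} {x : Fin n → R} {a : R}

lemma Fintype.linearCombination_snoc (x : Fin n → R) (a : R) (c : Fin n → R) (r : R) :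
    Fintype.linearCombination R (Fin.snoc x a) (Fin.snoc c r) =
      Fintype.linearCombination R x c + r * a := by
  simp [Fintype.linearCombination_apply, Fin.sum_univ_castSucc]

lemma exists_of_mem_koszulRelations_snoc {v : Fin (n + 1) → R}
    (hv : v ∈ koszulRelations (Fin.snoc x a)) :
    ∃ u ∈ koszulRelations x, ∃ b : Fin n → R,
      (∀ i, v i.castSucc = u i - a * b i) ∧
        v (Fin.last n) = Fintype.linearCombination R x b := by
  induction hv using Submodule.span_induction with
  | mem v hv =>
    obtain ⟨i, j, rfl⟩ := hv
    cases i using Fin.lastCases with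
    | last =>
      cases j using Fin.lastCases with
      | last => exact ⟨0, zero_mem _, 0, by simp, by simp⟩
      | cast j => exact ⟨0, zero_mem _, -Pi.single j 1, by simp [Pi.single_apply], by simp⟩
    | cast i =>
      cases j using Fin.lastCases with
      | last => exact ⟨0, zero_mem _, Pi.single i 1, by simp [Pi.single_apply], by simp⟩
      | cast j =>
        exact ⟨_, Submodule.subset_span ⟨i, j, rfl⟩, 0, by simp [Pi.single_apply], by simp⟩
  | zero => exact ⟨0, zero_mem _, 0, by simp, by simp⟩
  | add v w _ _ hv hw =>
    obtain ⟨u, hu, b, hvu, hvb⟩ := hv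
    obtain ⟨u', hu', b', hwu, hwb⟩ := hw
    refine ⟨u + u', add_mem hu hu', b + b', fun i => ?_, by simp [hvb, hwb]⟩
    simp only [Pi.add_apply, hvu, hwu]
    ring
  | smul r v _ hv =>
    obtain ⟨u, hu, b, hvu, hvb⟩ := hv
    refine ⟨r • u, Submodule.smul_mem _ r hu, r • b, fun i => ?_, by simp [hvb]⟩
    simp only [Pi.smul_apply, smul_eq_mul, hvu]
    ring

lemma ker_linearCombination_le_koszulRelations_of_snoc [IsNoetherianRing R]
    (ha : a ∈ (⊥ : Ideal R).jacobson)
    (h : LinearMap.ker (Fintype.linearCombination R (Fin.snoc x a)) ≤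
      koszulRelations (Fin.snoc x a)) :
    LinearMap.ker (Fintype.linearCombination R x) ≤ koszulRelations x := by
  refine Submodule.le_of_le_smul_of_le_jacobson_bot (IsNoetherian.noetherian _)
    (Ideal.span_le.mpr (Set.singleton_subset_iff.mpr ha)) fun c hc => ?_
  have hc0 : Fin.snoc c 0 ∈ LinearMap.ker (Fintype.linearCombination R (Fin.snoc x a)) := by
    simpa [Fintype.linearCombination_snoc] using hc
  obtain ⟨u, hu, b, hcu, hb⟩ := exists_of_mem_koszulRelations_snoc (h hc0)
  have hc : c = u - a • b := funext fun i => by simpa using hcu i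
  rw [hc]
  exact Submodule.sub_mem_sup hu
    (Submodule.smul_mem_smul (Ideal.mem_span_singleton_self a) (by simpa using hb.symm))

lemma isSMulRegular_quotient_of_ker_le_koszulRelations_snoc
    (h : LinearMap.ker (Fintype.linearCombination R (Fin.snoc x a)) ≤
      koszulRelations (Fin.snoc x a)) :
    IsSMulRegular (R ⧸ (Ideal.ofList (List.ofFn x) • ⊤ : Submodule R R)) a := by
  have hspan : (Ideal.ofList (List.ofFn x) • ⊤ : Submodule R R) =
      LinearMap.range (Fintype.linearCombination R x) := by
    rw [Fintype.range_linearCombination, smul_eq_mul, Ideal.mul_top, Ideal.ofList]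
    simp only [List.mem_ofFn', Set.ofPred_mem_eq]
  rw [isSMulRegular_quotient_iff_mem_of_smul_mem, hspan]
  rintro z ⟨c, hc⟩
  have hcz : Fin.snoc c (-z) ∈ LinearMap.ker (Fintype.linearCombination R (Fin.snoc x a)) := by
    simp [Fintype.linearCombination_snoc, hc, mul_comm]
  obtain ⟨-, -, b, -, hb⟩ := exists_of_mem_koszulRelations_snoc (h hcz)
  exact ⟨-b, by rw [map_neg, ← hb, Fin.snoc_last, neg_neg]⟩

end Snoc

theorem isWeaklyRegular_ofFn_of_ker_le_koszulRelations [IsNoetherianRing R] {n : ℕ}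
    (x : Fin n → R) (hx : ∀ i, x i ∈ (⊥ : Ideal R).jacobson)
    (h : LinearMap.ker (Fintype.linearCombination R x) ≤ koszulRelations x) :
    RingTheory.Sequence.IsWeaklyRegular R (List.ofFn x) := by
  induction x using Fin.snocInduction with
  | elim0 => simp
  | snoc x a ih =>
    have hxa : ∀ i, x i ∈ (⊥ : Ideal R).jacobson := fun i => by simpa using hx i.castSucc
    have ha : a ∈ (⊥ : Ideal R).jacobson := by simpa using hx (Fin.last _)
    rw [List.ofFn_snoc, RingTheory.Sequence.isWeaklyRegular_append_iff,
      RingTheory.Sequence.isWeaklyRegular_singleton_iff]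
    exact ⟨ih hxa (ker_linearCombination_le_koszulRelations_of_snoc ha h),
      isSMulRegular_quotient_of_ker_le_koszulRelations_snoc h⟩

end Koszul

/-- Depth sensitivity of the Koszul complex: over a commutative noetherian local ring,
if `x₁, …, xₙ` lie in the maximal ideal and the first Koszul homology vanishes (every
relation `∑ cᵢ xᵢ = 0` lies in the span of the trivial Koszul relations
`xᵢ eⱼ − xⱼ eᵢ`), then `x₁, …, xₙ` is a regular sequence. -/
theorem stmt16 {R : Type*} [CommRing R] [IsNoetherianRing R] [IsLocalRing R]
    {n : ℕ} (x : Fin n → R) (hx : ∀ i, x i ∈ IsLocalRing.maximalIdeal R)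
    (hH1 : ∀ c : Fin n → R, ∑ i, c i * x i = 0 →
      c ∈ Submodule.span R
        {v : Fin n → R | ∃ i j, v = x i • (Pi.single j 1 : Fin n → R) - x j • (Pi.single i 1 : Fin n → R)}) :
    RingTheory.Sequence.IsRegular R (List.ofFn x) := by
  have hker : LinearMap.ker (Fintype.linearCombination R x) ≤ koszulRelations x := fun c hc =>
    hH1 c (by simpa [Fintype.linearCombination_apply] using hc)
  exact .of_isWeaklyRegular_of_mem_maximalIdeal R (by simpa [List.mem_ofFn] using hx)
    (isWeaklyRegular_ofFn_of_ker_le_koszulRelations x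
      (fun i => IsLocalRing.maximalIdeal_le_jacobson _ (hx i)) hker)
end

section
/- Let L = ⊕_{i≥1} L^i be a graded Lie algebra over a field with L^i finite-dimensional for each i, and suppose z ∈ L satisfies [z, L^{>n}] = 0 for some n. Then the ideal generated by z is solvable if L^{≤n} is finite-dimensional, since the derived series of the ideal (z) eventually lands in [z-ideal ∩ L^{>n}, -] terms and terminates. -/
/-!
Filter `L` by degree, `F m = ⨁_{i ≥ m} Lⁱ`. Since `L⁰ = 0` we have `F 1 = L`, and
`[F a, F b] ⊆ F (a + b)`, so the `m`-th derived algebra `D^m L` lies in `F (2^m)`; in particular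
`z` centralizes `D^n L ⊆ F (n + 1)`. The centralizer `C` of the ideal `D^n L` is an ideal, so it
contains the ideal generated by `z`, and `C` is solvable:
`D^{n+1} C = [D^n C, D^n C] ⊆ [C, D^n L] = 0`.
-/

open LieAlgebra

section DegreeFiltration

variable {R M : Type*} [Semiring R] [AddCommMonoid M] [Module R M]

def degreeGE (ℒ : ℕ → Submodule R M) (m : ℕ) : Submodule R M := ⨆ i ≥ m, ℒ i

variable {ℒ : ℕ → Submodule R M}

theorem le_degreeGE {m i : ℕ} (h : m ≤ i) : ℒ i ≤ degreeGE ℒ m :=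
  le_iSup₂_of_le i h le_rfl

theorem degreeGE_antitone : Antitone (degreeGE ℒ) := fun _ _ hab =>
  biSup_mono fun _ hi => hab.trans hi

theorem degreeGE_one [DirectSum.Decomposition ℒ] (hzero : ℒ 0 = ⊥) : degreeGE ℒ 1 = ⊤ := by
  rw [eq_top_iff, ← (DirectSum.Decomposition.isInternal ℒ).submodule_iSup_eq_top]
  refine iSup_le fun i => ?_
  rcases i with _ | i
  · exact hzero ▸ bot_le
  · exact le_degreeGE (Nat.succ_pos i)

end DegreeFiltration

section Lie

variable {R L : Type*} [CommRing R] [LieRing L] [LieAlgebra R L]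

theorem lie_mem_degreeGE {ℒ : ℕ → Submodule R L}
    (hbracket : ∀ i j : ℕ, ∀ x ∈ ℒ i, ∀ y ∈ ℒ j, ⁅x, y⁆ ∈ ℒ (i + j))
    {a b : ℕ} {x y : L} (hx : x ∈ degreeGE ℒ a) (hy : y ∈ degreeGE ℒ b) :
    ⁅x, y⁆ ∈ degreeGE ℒ (a + b) := by
  have : Submodule.map₂ (LieModule.toEnd R L L : L →ₗ[R] Module.End R L)
      (degreeGE ℒ a) (degreeGE ℒ b) ≤ degreeGE ℒ (a + b) := by
    simp only [degreeGE, Submodule.map₂_iSup_left, Submodule.map₂_iSup_right, iSup_le_iff,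
      Submodule.map₂_le]
    intro j hj i hi x hx y hy
    exact le_degreeGE (by omega) (hbracket i j x hx y hy)
  exact this (Submodule.apply_mem_map₂ _ hx hy)

theorem LieAlgebra.isSolvable_ker_derivedSeries (m : ℕ) :
    IsSolvable (LieModule.ker R L (derivedSeries R L m)) := by
  set K := LieModule.ker R L (derivedSeries R L m)
  have hK : ⁅K, derivedSeries R L m⁆ = ⊥ :=
    (LieSubmodule.lie_eq_bot_iff _ _).mpr fun x hx y hy =>
      congrArg Subtype.val ((LieModule.mem_ker R L _ x).mp hx ⟨y, hy⟩)
  have hbot : derivedSeriesOfIdeal R L (m + 1) K = ⊥ := by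
    rw [derivedSeriesOfIdeal_succ, eq_bot_iff, ← hK]
    exact LieSubmodule.mono_lie (derivedSeriesOfIdeal_le_self K m)
      (derivedSeriesOfIdeal_mono le_top m)
  exact IsSolvable.mk ((LieIdeal.derivedSeries_eq_bot_iff K (m + 1)).mpr hbot)

theorem LieAlgebra.isSolvable_lieSpan_of_lie_derivedSeries_eq_zero {z : L} {m : ℕ}
    (hz : ∀ x ∈ derivedSeries R L m, ⁅z, x⁆ = 0) :
    IsSolvable (LieSubmodule.lieSpan R L {z} : LieIdeal R L) := by
  refine le_solvable_ideal_solvable ?_ (isSolvable_ker_derivedSeries m)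
  rw [LieSubmodule.lieSpan_le, Set.singleton_subset_iff]
  exact (LieModule.mem_ker R L _ z).mpr fun ⟨x, hx⟩ => Subtype.ext (hz x hx)

theorem LieAlgebra.derivedSeries_le_two_pow {F : ℕ → Submodule R L} (hF : F 1 = ⊤)
    (hlie : ∀ a b, ∀ x ∈ F a, ∀ y ∈ F b, ⁅x, y⁆ ∈ F (a + b)) (m : ℕ) :
    (derivedSeries R L m).toSubmodule ≤ F (2 ^ m) := by
  induction m with
  | zero => simp [hF]
  | succ m ih =>
    rw [derivedSeries_def, derivedSeriesOfIdeal_succ, ← derivedSeries_def,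
      LieSubmodule.lieIdeal_oper_eq_linear_span', Submodule.span_le]
    rintro - ⟨x, hx, y, hy, rfl⟩
    rw [pow_succ, mul_two]
    exact hlie _ _ x (ih hx) y (ih hy)

end Lie

theorem stmt17_general {k L : Type*} [Field k] [LieRing L] [LieAlgebra k L]
    (ℒ : ℕ → Submodule k L) [DirectSum.Decomposition ℒ]
    (hzero : ℒ 0 = ⊥)
    (hbracket : ∀ i j : ℕ, ∀ x ∈ ℒ i, ∀ y ∈ ℒ j, ⁅x, y⁆ ∈ ℒ (i + j))
    (n : ℕ) (z : L) (hz : ∀ i : ℕ, n < i → ∀ x ∈ ℒ i, ⁅z, x⁆ = 0) :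
    LieAlgebra.IsSolvable (LieSubmodule.lieSpan k L {z} : LieIdeal k L) := by
  have hz_tail : degreeGE ℒ (n + 1) ≤ LinearMap.ker (LieModule.toEnd k L L z) :=
    iSup₂_le fun i hi x hx => hz i hi x hx
  have hderived : (derivedSeries k L n).toSubmodule ≤ degreeGE ℒ (n + 1) :=
    (derivedSeries_le_two_pow (degreeGE_one hzero)
      (fun _ _ _ hx _ hy => lie_mem_degreeGE hbracket hx hy) n).trans
      (degreeGE_antitone n.lt_two_pow_self)
  exact isSolvable_lieSpan_of_lie_derivedSeries_eq_zero fun x hx => hz_tail (hderived hx)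

/-- Let `L = ⊕_{i ≥ 1} Lⁱ` be a graded Lie algebra over a field with finite-dimensional
graded pieces, and let `z ∈ L` satisfy `[z, Lⁱ] = 0` for all `i > n`. Then the Lie
ideal generated by `z` is solvable. -/
theorem stmt17 {k L : Type*} [Field k] [LieRing L] [LieAlgebra k L]
    (ℒ : ℕ → Submodule k L) [DirectSum.Decomposition ℒ]
    (hzero : ℒ 0 = ⊥)
    (hbracket : ∀ i j : ℕ, ∀ x ∈ ℒ i, ∀ y ∈ ℒ j, ⁅x, y⁆ ∈ ℒ (i + j))
    (hfin : ∀ i, FiniteDimensional k (ℒ i))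
    (n : ℕ) (z : L) (hz : ∀ i : ℕ, n < i → ∀ x ∈ ℒ i, ⁅z, x⁆ = 0) :
    LieAlgebra.IsSolvable (LieSubmodule.lieSpan k L {z} : LieIdeal k L) :=
  stmt17_general ℒ hzero hbracket n z hz
end
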